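/- arXiv:2406.14368 — 5 statements merged into one kernel-verified Lean document; each statement's English description precedes it below -/
import Mathlib

section
/- Let R be a ring, z an indeterminate, S = R[z], and M an S-module with zM = 0, viewed also as an R-module in the natural way. Then the associated primes of M over S are exactly the ideals of the form qS + (z) where q ranges over the associated primes of M over R. -/
/-!
Since `X` kills `M`, every polynomial acts on `M` through its constant coefficient, so the
`R[X]`-module `M` is the `R`-module `M` with scalars restricted along the surjection
`constantCoeff : R[X] → R`. Annihilators, their radicals and primality all pull back along a
surjection, so `Ass_{R[X]}(M)` is the preimage of `Ass_R(M)`, and the preimage of `q` is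
`qR[X] + (X)`.
-/

open Polynomial

section

variable {A B M : Type*} [CommRing A] [CommRing B] [AddCommMonoid M] [Module A M]
  [Module B M] {f : A →+* B}

theorem Submodule.colon_bot_singleton_eq_comap (hf : ∀ (a : A) (m : M), a • m = f a • m)
    (x : M) :
    (⊥ : Submodule A M).colon {x} = ((⊥ : Submodule B M).colon {x}).comap f := by
  ext a
  simp only [Ideal.mem_comap, Submodule.mem_colon_singleton, Submodule.mem_bot, hf]

theorem isAssociatedPrime_comap_iff (hf : ∀ (a : A) (m : M), a • m = f a • m)
    (hsurj : Function.Surjective f) {p : Ideal B} :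
    IsAssociatedPrime (p.comap f) M ↔ IsAssociatedPrime p M := by
  simp only [IsAssociatedPrime, Submodule.isAssociatedPrime_def,
    Submodule.colon_bot_singleton_eq_comap hf, ← Ideal.comap_radical,
    (Ideal.comap_injective_of_surjective f hsurj).eq_iff]
  refine and_congr_left fun _ => ⟨fun hp => ?_, fun hp => Ideal.comap_isPrime f p⟩
  rw [← Ideal.map_comap_of_surjective f hsurj p]
  exact Ideal.map_isPrime_of_surjective hsurj (Ideal.comap_mono bot_le)

theorem associatedPrimes_eq_image_comap (hf : ∀ (a : A) (m : M), a • m = f a • m)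
    (hsurj : Function.Surjective f) :
    associatedPrimes A M = Ideal.comap f '' associatedPrimes B M := by
  ext P
  constructor
  · intro hP
    obtain ⟨x, hx⟩ := hP.2
    have hPq : P = ((⊥ : Submodule B M).colon {x}).radical.comap f := by
      rw [hx, Submodule.colon_bot_singleton_eq_comap hf, Ideal.comap_radical]
    exact ⟨_, (isAssociatedPrime_comap_iff hf hsurj).1 (hPq ▸ hP), hPq.symm⟩
  · rintro ⟨q, hq, rfl⟩
    exact (isAssociatedPrime_comap_iff hf hsurj).2 hq

end

namespace Polynomial

variable {R M : Type*} [CommSemiring R] [AddCommMonoid M] [Module R[X] M] [Module R M]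
  [IsScalarTower R R[X] M]

theorem smul_eq_constantCoeff_smul (hX : ∀ m : M, (X : R[X]) • m = 0) (f : R[X]) (m : M) :
    f • m = constantCoeff f • m := by
  conv_lhs => rw [← X_mul_divX_add f]
  rw [add_smul, mul_smul, hX, zero_add, ← algebraMap_eq, algebraMap_smul, constantCoeff_apply]

end Polynomial

theorem Ideal.comap_constantCoeff_eq_map_C_sup_span_X {R : Type*} [CommRing R] (q : Ideal R) :
    q.comap (constantCoeff : R[X] →+* R) = q.map C ⊔ Ideal.span {X} := by
  have hq : (q.map C).map constantCoeff = q := by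
    rw [Ideal.map_map,
      show constantCoeff.comp C = RingHom.id R from RingHom.ext fun _ => coeff_C_zero, Ideal.map_id]
  rw [← ker_constantCoeff, ← Ideal.comap_map_of_surjective' (constantCoeff : R[X] →+* R)
    constantCoeff_surjective, hq]

/-- Let `R` be a ring, `z` an indeterminate, `S = R[z]`, and `M` an
`S`-module with `zM = 0`, viewed as an `R`-module in the natural way (scalar tower).
Then `Ass_S(M) = { qS + (z) : q ∈ Ass_R(M) }`. -/
theorem associatedPrimes_polynomial_of_X_smul_eq_zero
    (R : Type) [CommRing R] (M : Type) [AddCommGroup M]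
    [Module (Polynomial R) M] [Module R M] [IsScalarTower R (Polynomial R) M]
    (hz : ∀ m : M, (Polynomial.X : Polynomial R) • m = 0) :
    associatedPrimes (Polynomial R) M =
      (fun q : Ideal R =>
          q.map (Polynomial.C : R →+* Polynomial R) ⊔
            Ideal.span {(Polynomial.X : Polynomial R)}) ''
        associatedPrimes R M := by
  rw [associatedPrimes_eq_image_comap (smul_eq_constantCoeff_smul hz) constantCoeff_surjective]
  simp only [Ideal.comap_constantCoeff_eq_map_C_sup_span_X]
end

section
/- Let G be a graph, v a cut vertex of G, and G' = G_v the graph obtained from G by adding all edges between neighbours of v (completing the neighbourhood of v). Let S be a subset of V(G) not containing v, and let a, b be vertices of G \ S different from v. Then a and b are connected by a path in G \ S if and only if they are connected by a path in G' \ S, if and only if they are connected by a path in H \ S, where H = G_v \ {v}. -/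
variable {V : Type} [Fintype V] [DecidableEq V]

/-- The number of connected components of the induced subgraph of `G` on `A`. -/
noncomputable def comps (G : SimpleGraph V) (A : Set V) : ℕ :=
  Nat.card ((G.induce A).ConnectedComponent)

/-- `v` is a cut vertex of `G`: removing `v` increases the number of connected components. -/
def CutVertex (G : SimpleGraph V) (v : V) : Prop :=
  Nat.card G.ConnectedComponent < comps G {v}ᶜ

/-- `G_v`: the graph obtained from `G` by completing the neighbourhood of `v`. -/
def completeNbhd (G : SimpleGraph V) (v : V) : SimpleGraph V :=
  G ⊔ SimpleGraph.fromRel (fun a b => G.Adj v a ∧ G.Adj v b)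

open SimpleGraph

/-- If every edge of `G'` within `A` has its endpoints reachable in `G.induce A`,
then reachability in `G'.induce A` implies reachability in `G.induce A`. -/
lemma reachable_of_edge_reachable {G G' : SimpleGraph V} {A : Set V}
    (hedge : ∀ (x y : A), G'.Adj x y → (G.induce A).Reachable x y) :
    ∀ {x y : A}, (G'.induce A).Reachable x y → (G.induce A).Reachable x y := by
  intro x y h
  obtain ⟨p⟩ := h
  induction p with
  | nil => exact Reachable.refl _
  | cons h p ih => exact (hedge _ _ h).trans ih

lemma key3 (G : SimpleGraph V) (v : V) (S : Set V) :
    ∀ (n : ℕ) (u w : ↥Sᶜ) (p : (G.induce Sᶜ).Walk u w), p.length ≤ n →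
      ∀ (hu : (u : V) ∈ ({v} ∪ S : Set V)ᶜ) (hw : (w : V) ∈ ({v} ∪ S : Set V)ᶜ),
      ((completeNbhd G v).induce ({v} ∪ S : Set V)ᶜ).Reachable ⟨u, hu⟩ ⟨w, hw⟩ := by
  intro n
  induction n with
  | zero =>
    intro u w p hp hu hw
    cases p with
    | nil => exact Reachable.refl _
    | cons h q => simp at hp
  | succ n ih =>
    intro u w p hp hu hw
    cases p with
    | nil => exact Reachable.refl _
    | @cons _ z _ h q =>
      by_cases hz : (z : V) = v
      · cases q with
        | nil =>
          exfalso
          apply hw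
          simp [← hz]
        | @cons _ z2 _ h2 q2 =>
          have hz2v : (z2 : V) ≠ v := by
            intro hzz
            have : G.Adj (z : V) (z2 : V) := h2
            rw [hz, hzz] at this
            exact this.ne rfl
          have hz2 : (z2 : V) ∈ ({v} ∪ S : Set V)ᶜ := by
            simp [hz2v, z2.2.out]
          have hlen : q2.length ≤ n := by
            simp only [SimpleGraph.Walk.length_cons] at hp; omega
          have tail := ih z2 w q2 hlen hz2 hw
          by_cases huz2 : (u : V) = (z2 : V)
          · have : u = z2 := Subtype.ext huz2
            subst this
            exact tail
          · have huv : (u : V) ≠ v := by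
              intro h'; apply hu; simp [h']
            have hadj : ((completeNbhd G v).induce ({v} ∪ S : Set V)ᶜ).Adj ⟨u, hu⟩ ⟨z2, hz2⟩ := by
              have h1 : G.Adj (u : V) (z : V) := h
              have h2' : G.Adj (z : V) (z2 : V) := h2
              rw [hz] at h1 h2'
              simp only [SimpleGraph.comap_adj, Function.Embedding.coe_subtype, completeNbhd,
                SimpleGraph.sup_adj, SimpleGraph.fromRel_adj]
              exact Or.inr ⟨huz2, Or.inl ⟨h1.symm, h2'⟩⟩
            exact hadj.reachable.trans tail
      · have hzT : (z : V) ∈ ({v} ∪ S : Set V)ᶜ := by simp [hz, z.2.out]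
        have hlen : q.length ≤ n := by
          simp only [SimpleGraph.Walk.length_cons] at hp; omega
        have hadj : ((completeNbhd G v).induce ({v} ∪ S : Set V)ᶜ).Adj ⟨u, hu⟩ ⟨z, hzT⟩ := by
          have h1 : G.Adj (u : V) (z : V) := h
          simp only [SimpleGraph.comap_adj, Function.Embedding.coe_subtype, completeNbhd,
            SimpleGraph.sup_adj]
          exact Or.inl h1
        exact hadj.reachable.trans (ih z w q hlen hzT hw)

/-- For a cut vertex `v` of `G`, a set `S` with `v ∉ S`, and vertices
`a, b ∉ S` different from `v`: `a` and `b` are connected in `G \ S` iff they are connected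
in `G_v \ S` iff they are connected in `(G_v \ {v}) \ S`. -/
theorem reachable_deleteVerts_iff
    (G : SimpleGraph V) (v : V) (hv : CutVertex G v) (S : Set V) (hvS : v ∉ S)
    (a b : V) (ha : a ∈ Sᶜ) (hb : b ∈ Sᶜ)
    (ha' : a ∈ ({v} ∪ S : Set V)ᶜ) (hb' : b ∈ ({v} ∪ S : Set V)ᶜ) :
    ((G.induce Sᶜ).Reachable ⟨a, ha⟩ ⟨b, hb⟩ ↔
      ((completeNbhd G v).induce Sᶜ).Reachable ⟨a, ha⟩ ⟨b, hb⟩) ∧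
    ((G.induce Sᶜ).Reachable ⟨a, ha⟩ ⟨b, hb⟩ ↔
      ((completeNbhd G v).induce ({v} ∪ S : Set V)ᶜ).Reachable ⟨a, ha'⟩ ⟨b, hb'⟩) := by
  have hvSc : v ∈ Sᶜ := hvS
  -- back direction shared: reachable in G'.induce Sᶜ → reachable in G.induce Sᶜ
  have hback : ∀ {x y : ↥Sᶜ}, ((completeNbhd G v).induce Sᶜ).Reachable x y →
      (G.induce Sᶜ).Reachable x y := by
    apply reachable_of_edge_reachable
    intro x y hxy
    rcases hxy with h | h
    · exact (by exact h : (G.induce Sᶜ).Adj x y).reachable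
    · obtain ⟨hne, h⟩ := h
      have hx : G.Adj v (x : V) ∧ G.Adj v (y : V) := by tauto
      have e1 : (G.induce Sᶜ).Adj x ⟨v, hvSc⟩ := hx.1.symm
      have e2 : (G.induce Sᶜ).Adj ⟨v, hvSc⟩ y := hx.2
      exact e1.reachable.trans e2.reachable
  have hsub : ({v} ∪ S : Set V)ᶜ ⊆ Sᶜ := Set.compl_subset_compl.mpr Set.subset_union_right
  constructor
  · constructor
    · intro h
      refine h.mono ?_
      intro x y hxy
      exact Or.inl hxy
    · exact hback
  · constructor
    · intro h
      obtain ⟨p⟩ := h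
      exact key3 G v S p.length _ _ p le_rfl ha' hb'
    · intro h
      have := h.map ((completeNbhd G v).induceHomOfLE hsub).toHom
      exact hback this
end

section
/- Let G be a graph with a cut vertex v, and let G' = G_v be obtained by completing the neighbourhood of v. Then C(G') = { S ∈ C(G) : v ∉ S }, where C(G) denotes the collection of subsets S ⊆ V(G) such that S = ∅ or removing any vertex v from S strictly decreases the number of connected components of G \ S (i.e. c(S \ {w}) < c(S) for all w ∈ S). -/
/-!
A vertex `v` of `G_v` is simplicial: its neighbourhood is a clique. Putting a simplicial vertex
back into a vertex set never merges components (a path through `v` can jump directly between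
its two neighbours), so `v` lies in no member of `C(G_v)`. On the other hand, as long as `v` is
present, the extra edges of `G_v` join vertices that are already connected through `v`, so
`G` and `G_v` have the same components on every vertex set containing `v`.
-/

variable {V : Type} [Fintype V] [DecidableEq V]

/-- `C(G)` for the graph `G` restricted to ground vertex set `W`: the sets `S ⊆ W` which are
empty or such that adding back any vertex of `S` strictly reconnects components. -/
def cutSets (G : SimpleGraph V) (W : Set V) : Set (Set V) :=
  {S | S ⊆ W ∧ (S = ∅ ∨ ∀ w ∈ S, comps G (W \ (S \ {w})) < comps G (W \ S))}

namespace SimpleGraph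

variable {α : Type*}

lemma reachable_eq_of_le_of_adj_reachable {H H' : SimpleGraph α} (hle : H ≤ H')
    (hadj : ∀ a b, H'.Adj a b → H.Reachable a b) : H'.Reachable = H.Reachable := by
  refine le_antisymm ?_ fun a b h => h.mono hle
  rw [reachable_eq_reflTransGen]
  exact Relation.reflTransGen_le_of_equivalence_of_le H.reachable_is_equivalence hadj

lemma natCard_connectedComponent_congr {H H' : SimpleGraph α}
    (h : H.Reachable = H'.Reachable) :
    Nat.card H.ConnectedComponent = Nat.card H'.ConnectedComponent :=
  Nat.card_congr (Quot.congrRight fun a b => by rw [h])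

lemma reachable_induce_of_reachable_induce_insert {H : SimpleGraph α} {v : α} {A : Set α}
    (hv : H.IsClique (H.neighborSet v)) {x y : α} (hx : x ∈ A) (hy : y ∈ A)
    (h : (H.induce (insert v A)).Reachable ⟨x, .inr hx⟩ ⟨y, .inr hy⟩) :
    (H.induce A).Reachable ⟨x, hx⟩ ⟨y, hy⟩ := by
  classical
  -- Retract `v` onto a neighbour `a₀` in `A`; as `N(v)` is a clique, every edge at `v` becomes
  -- a path of length at most one.
  let a₀ : A := if hN : ∃ a ∈ A, H.Adj v a then ⟨hN.choose, hN.choose_spec.1⟩ else ⟨x, hx⟩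
  let g : ↥(insert v A) → A := fun z => if hz : (z : α) ∈ A then ⟨z, hz⟩ else a₀
  have near : ∀ a (ha : a ∈ A), H.Adj v a → (H.induce A).Reachable a₀ ⟨a, ha⟩ := by
    intro a ha hva
    have hN : ∃ a ∈ A, H.Adj v a := ⟨a, ha, hva⟩
    have ha₀ : a₀ = ⟨hN.choose, hN.choose_spec.1⟩ := dif_pos hN
    rw [ha₀]
    by_cases he : hN.choose = a
    · subst he; rfl
    · exact Adj.reachable (hv hN.choose_spec.2 hva he)
  have hg : ∀ z w, (H.induce (insert v A)).Adj z w → (H.induce A).Reachable (g z) (g w) := by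
    rintro ⟨z, hz'⟩ ⟨w, hw'⟩ hzw
    have hzw : H.Adj z w := hzw
    by_cases hz : z ∈ A <;> by_cases hw : w ∈ A
    · simp only [g, hz, hw, dite_true]
      exact Adj.reachable hzw
    · obtain rfl : w = v := hw'.resolve_right hw
      simp only [g, hz, hw, dite_true, dite_false]
      exact (near z hz hzw.symm).symm
    · obtain rfl : z = v := hz'.resolve_right hz
      simp only [g, hz, hw, dite_true, dite_false]
      exact near w hw hzw
    · obtain rfl : z = v := hz'.resolve_right hz
      obtain rfl : w = z := hw'.resolve_right hw
      exact absurd hzw (H.loopless.irrefl _)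
  rw [reachable_iff_reflTransGen] at h
  have := Relation.ReflTransGen.lift' g
    (fun z w hzw => (reachable_iff_reflTransGen _ _).1 (hg z w hzw)) _ _ h
  rw [reachable_iff_reflTransGen]
  simpa only [g, hx, hy, dite_true, Function.onFun] using this

end SimpleGraph

set_option linter.unusedSectionVars false

open SimpleGraph

lemma comps_le_comps_insert {H : SimpleGraph V} {v : V} (hv : H.IsClique (H.neighborSet v))
    (A : Set V) : comps H A ≤ comps H (insert v A) := by
  refine Nat.card_le_card_of_injective
    (ConnectedComponent.map (H.induceHomOfLE (Set.subset_insert v A)).toHom) ?_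
  intro c c' hcc'
  induction c using ConnectedComponent.ind with | h a =>
  induction c' using ConnectedComponent.ind with | h a' =>
  simp only [ConnectedComponent.map_mk, ConnectedComponent.eq] at hcc' ⊢
  exact reachable_induce_of_reachable_induce_insert hv a.2 a'.2 hcc'

lemma notMem_of_mem_cutSets {H : SimpleGraph V} {v : V} (hv : H.IsClique (H.neighborSet v))
    {W S : Set V} (hS : S ∈ cutSets H W) : v ∉ S := by
  intro hvS
  obtain ⟨hSW, rfl | hcut⟩ := hS
  · exact hvS
  have hinsert : W \ (S \ {v}) = insert v (W \ S) := by
    rw [Set.sdiff_sdiff_right, Set.inter_singleton_of_mem (hSW hvS), Set.union_singleton]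
  have := hcut v hvS
  rw [hinsert] at this
  exact (comps_le_comps_insert hv _).not_gt this

lemma completeNbhd_adj {G : SimpleGraph V} {v a b : V} :
    (completeNbhd G v).Adj a b ↔ G.Adj a b ∨ a ≠ b ∧ G.Adj v a ∧ G.Adj v b := by
  simp only [completeNbhd, sup_adj, fromRel_adj]
  tauto

lemma completeNbhd_adj_left {G : SimpleGraph V} {v a : V} :
    (completeNbhd G v).Adj v a ↔ G.Adj v a := by
  rw [completeNbhd_adj]
  have := G.loopless.irrefl v
  tauto

lemma isClique_neighborSet_completeNbhd (G : SimpleGraph V) (v : V) :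
    (completeNbhd G v).IsClique ((completeNbhd G v).neighborSet v) := by
  intro a ha b hb hab
  rw [mem_neighborSet, completeNbhd_adj_left] at ha hb
  exact completeNbhd_adj.2 (.inr ⟨hab, ha, hb⟩)

lemma comps_completeNbhd {G : SimpleGraph V} {v : V} {A : Set V} (hvA : v ∈ A) :
    comps (completeNbhd G v) A = comps G A := by
  refine natCard_connectedComponent_congr (reachable_eq_of_le_of_adj_reachable ?_ ?_)
  · exact fun a b hab => completeNbhd_adj.2 (.inl hab)
  rintro a b hab
  rcases completeNbhd_adj.1 hab with hab | ⟨-, hva, hvb⟩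
  · exact Adj.reachable hab
  · have hav : (G.induce A).Adj a ⟨v, hvA⟩ := hva.symm
    exact hav.reachable.trans (Adj.reachable (u := (⟨v, hvA⟩ : A)) hvb)

lemma mem_cutSets_completeNbhd_iff {G : SimpleGraph V} {v : V} {W S : Set V} (hvW : v ∈ W)
    (hvS : v ∉ S) : S ∈ cutSets (completeNbhd G v) W ↔ S ∈ cutSets G W := by
  refine and_congr_right fun _ => or_congr_right (forall₂_congr fun w _ => ?_)
  rw [comps_completeNbhd (A := W \ (S \ {w})) ⟨hvW, fun h => hvS h.1⟩,
    comps_completeNbhd (A := W \ S) ⟨hvW, hvS⟩]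

theorem cutSets_completeNbhd_general
    (G : SimpleGraph V) (v : V) :
    cutSets (completeNbhd G v) Set.univ = {S ∈ cutSets G Set.univ | v ∉ S} := by
  ext S
  refine ⟨fun hS => ?_, fun ⟨hS, hvS⟩ => (mem_cutSets_completeNbhd_iff (Set.mem_univ v) hvS).2 hS⟩
  have hvS := notMem_of_mem_cutSets (isClique_neighborSet_completeNbhd G v) hS
  exact ⟨(mem_cutSets_completeNbhd_iff (Set.mem_univ v) hvS).1 hS, hvS⟩

/-- For a cut vertex `v` of `G` and `G' = G_v`,
`C(G') = { S ∈ C(G) : v ∉ S }`. -/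
theorem cutSets_completeNbhd
    (G : SimpleGraph V) (v : V) (hv : CutVertex G v) :
    cutSets (completeNbhd G v) Set.univ = {S ∈ cutSets G Set.univ | v ∉ S} :=
  cutSets_completeNbhd_general G v
end

section
/- Let G be a graph with a cut vertex v, let H = G_v \ {v} (complete the neighbourhood of v, then delete v) and G'' = G \ {v}. If S ∈ C(H) and N_G(v) ⊆ S, then S ∈ C(G''). -/
variable {V : Type} [Fintype V] [DecidableEq V]

lemma comps_completeNbhd_eq (G : SimpleGraph V) (v : V) (A : Set V)
    (h : ∀ a ∈ A, ∀ b ∈ A, G.Adj v a → G.Adj v b → a = b) :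
    comps (completeNbhd G v) A = comps G A := by
  have hind : (completeNbhd G v).induce A = G.induce A := by
    ext ⟨a, ha⟩ ⟨b, hb⟩
    simp only [SimpleGraph.comap_adj, completeNbhd, SimpleGraph.sup_adj,
      SimpleGraph.fromRel_adj]
    constructor
    · rintro (hg | ⟨hne, ⟨h1, h2⟩ | ⟨h1, h2⟩⟩)
      · exact hg
      · exact absurd (h a ha b hb h1 h2) hne
      · exact absurd (h a ha b hb h2 h1) hne
    · exact fun hg => Or.inl hg
  unfold comps
  rw [hind]

/-- If `S ∈ C(H)` where `H = G_v \ {v}`, and `N_G(v) ⊆ S`, then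
`S ∈ C(G'')` where `G'' = G \ {v}`. -/
theorem mem_cutSets_deleteVert_of_neighborSet_subset
    (G : SimpleGraph V) (v : V) (hv : CutVertex G v) (S : Set V)
    (hS : S ∈ cutSets (completeNbhd G v) {v}ᶜ)
    (hN : G.neighborSet v ⊆ S) :
    S ∈ cutSets G {v}ᶜ := by
  obtain ⟨hSW, hc⟩ := hS
  refine ⟨hSW, ?_⟩
  rcases hc with h | h
  · exact Or.inl h
  · right
    intro w hw
    have key1 : comps (completeNbhd G v) ({v}ᶜ \ S) = comps G ({v}ᶜ \ S) := by
      apply comps_completeNbhd_eq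
      intro a ha b hb hva hvb
      exact absurd (hN hva) ha.2
    have key2 : comps (completeNbhd G v) ({v}ᶜ \ (S \ {w}))
        = comps G ({v}ᶜ \ (S \ {w})) := by
      apply comps_completeNbhd_eq
      intro a ha b hb hva hvb
      have haS : a ∈ S := hN hva
      have hbS : b ∈ S := hN hvb
      have haw : a = w := by
        by_contra hne
        exact ha.2 ⟨haS, hne⟩
      have hbw : b = w := by
        by_contra hne
        exact hb.2 ⟨hbS, hne⟩
      rw [haw, hbw]
    rw [← key1, ← key2]
    exact h w hw
end

section
/- Let G be a block graph that is not a disjoint union of cliques. Then there exists a cut vertex v of G such that C(G \ {v}) = { S \ {v} : S ∈ C(G) with v ∈ S }. -/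
set_option linter.unusedSectionVars false


variable {V : Type} [Fintype V] [DecidableEq V]

/-- A block graph: the vertices of any cycle are pairwise adjacent. -/
def IsBlockGraph (G : SimpleGraph V) : Prop :=
  ∀ (v : V) (c : G.Walk v v), c.IsCycle →
    ∀ a ∈ c.support, ∀ b ∈ c.support, a = b ∨ G.Adj a b

open SimpleGraph

section Aux

/-- Reachability inside the induced subgraph on `A`, as a relation on `V`. -/
def Rch (G : SimpleGraph V) (A : Set V) (a b : V) : Prop :=
  ∃ (ha : a ∈ A) (hb : b ∈ A), (G.induce A).Reachable ⟨a, ha⟩ ⟨b, hb⟩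

variable {G : SimpleGraph V} {A B : Set V} {a b c : V}

lemma rch_refl (ha : a ∈ A) : Rch G A a a := ⟨ha, ha, .refl _⟩

lemma rch_symm (h : Rch G A a b) : Rch G A b a := by
  obtain ⟨ha, hb, h⟩ := h; exact ⟨hb, ha, h.symm⟩

lemma rch_trans (h : Rch G A a b) (h' : Rch G A b c) : Rch G A a c := by
  obtain ⟨ha, hb, h⟩ := h; obtain ⟨hb', hc, h'⟩ := h'
  exact ⟨ha, hc, h.trans h'⟩

lemma induce_adj' {x y : ↥A} (h : G.Adj x y) : (G.induce A).Adj x y := h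

lemma rch_adj (h : G.Adj a b) (ha : a ∈ A) (hb : b ∈ A) : Rch G A a b :=
  ⟨ha, hb, (induce_adj' (x := ⟨a, ha⟩) (y := ⟨b, hb⟩) h).reachable⟩

lemma walk_transfer {u v : ↥A} (q : (G.induce A).Walk u v)
    (h : ∀ z ∈ q.support, (z : V) ∈ B) : Rch G B u v := by
  induction q with
  | nil => exact rch_refl (h _ (by simp))
  | @cons x y w hadj p ih =>
    refine rch_trans (rch_adj hadj (h x (by simp)) (h y (by simp))) (ih ?_)
    intro z hz; exact h z (by simp [hz])

lemma rch_mono (hAB : A ⊆ B) (h : Rch G A a b) : Rch G B a b := by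
  obtain ⟨ha, hb, ⟨q⟩⟩ := h
  exact walk_transfer q fun z _ => hAB z.2

lemma mem_support_rch {u v : ↥A} (q : (G.induce A).Walk u v) {z : ↥A} (hz : z ∈ q.support) :
    Rch G A u z :=
  walk_transfer (q.takeUntil z hz) fun t _ => t.2

lemma rch_strengthen (h : Rch G A a b) (hAB : ∀ z, Rch G A a z → z ∈ B) : Rch G B a b := by
  obtain ⟨ha, hb, ⟨q⟩⟩ := h
  exact walk_transfer q fun z hz => hAB z (mem_support_rch q hz)

/-- Rerouting a walk around a vertex whose neighbourhood (within `A`) is a clique. -/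
lemma reroute {w : V} (hw : w ∈ A)
    (hcl : ∀ p q : V, p ∈ A → q ∈ A → G.Adj w p → G.Adj w q → p = q ∨ G.Adj p q) :
    ∀ (n : ℕ) (a b : ↥A) (q : (G.induce A).Walk a b), q.length ≤ n →
      (a : V) ≠ w → (b : V) ≠ w → Rch G (A \ {w}) a b := by
  intro n
  induction n with
  | zero =>
    intro a b q hq ha _
    cases q with
    | nil => exact rch_refl ⟨a.2, ha⟩
    | cons h p => simp at hq
  | succ n ih =>
    intro a b q hq ha hb
    by_cases hmem : (⟨w, hw⟩ : ↥A) ∈ q.support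
    · have hspec := q.take_spec hmem
      set q₁ := q.takeUntil _ hmem with hq₁
      set q₂ := q.dropUntil _ hmem with hq₂
      have hlen : q₁.length + q₂.length = q.length := by
        rw [← hspec]; exact (Walk.length_append _ _).symm
      have hne1 : a ≠ (⟨w, hw⟩ : ↥A) := fun h => ha (congrArg Subtype.val h)
      have hne2 : (⟨w, hw⟩ : ↥A) ≠ b := fun h => hb (congrArg Subtype.val h).symm
      obtain ⟨c, hwc, r, hr⟩ := Walk.exists_eq_cons_of_ne (fun h => ha (congrArg Subtype.val h.symm)) q₁.reverse
      obtain ⟨d, hwd, r₂, hr₂⟩ := Walk.exists_eq_cons_of_ne hne2 q₂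
      have hlr : r.length + 1 = q₁.length := by
        have := congrArg Walk.length hr
        simpa [Walk.length_reverse] using this.symm
      have hlr₂ : r₂.length + 1 = q₂.length := by
        have := congrArg Walk.length hr₂
        simpa using this.symm
      have hcne : (c : V) ≠ w → (d : V) ≠ w → True := fun _ _ => trivial
      rcases hcl c d c.2 d.2 hwc hwd with hcd | hcd
      · -- c = d : new walk r.reverse ++ r₂
        have hcd' : c = d := Subtype.ext hcd
        subst hcd'
        refine ih a b (r.reverse.append r₂) ?_ ha hb
        have : r.reverse.length + r₂.length ≤ n := by
          rw [Walk.length_reverse]; omega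
        simpa [Walk.length_append] using this
      · -- adjacent
        refine ih a b (r.reverse.append (Walk.cons (induce_adj' hcd) r₂)) ?_ ha hb
        have : r.reverse.length + (r₂.length + 1) ≤ n := by
          rw [Walk.length_reverse]; omega
        simpa [Walk.length_append] using this
    · refine walk_transfer q fun z hz => ⟨z.2, fun h => hmem ?_⟩
      have : z = (⟨w, hw⟩ : ↥A) := Subtype.ext h
      rwa [this] at hz


/-- inclusion-induced map on connected components -/
noncomputable def cmap (h : A ⊆ B) :
    (G.induce A).ConnectedComponent → (G.induce B).ConnectedComponent :=
  ConnectedComponent.map (G.induceHomOfLE h).toHom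

lemma cmap_mk (h : A ⊆ B) (ha : a ∈ A) :
    cmap (G := G) h ((G.induce A).connectedComponentMk ⟨a, ha⟩) = (G.induce B).connectedComponentMk ⟨a, h ha⟩ := rfl

lemma comps_lt_of_sep {v x y : V} (hv : v ∈ A) (hx : x ∈ A \ {v}) (hy : y ∈ A \ {v})
    (hax : G.Adj v x) (hay : G.Adj v y) (hnr : ¬ Rch G (A \ {v}) x y) :
    comps G A < comps G (A \ {v}) := by
  classical
  set f := cmap (G := G) (Set.diff_subset : A \ {v} ⊆ A) with hf
  have hsurj : Function.Surjective f := by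
    intro cc
    induction cc using ConnectedComponent.ind with
    | _ z =>
      obtain ⟨z, hz⟩ := z
      by_cases hzv : z = v
      · refine ⟨(G.induce (A \ {v})).connectedComponentMk ⟨x, hx⟩, ?_⟩
        rw [hf, cmap_mk]
        refine ConnectedComponent.sound ?_
        have hxz : G.Adj x z := by rw [hzv]; exact hax.symm
        exact (induce_adj' (x := ⟨x, hx.1⟩) (y := ⟨z, hz⟩) hxz).reachable
      · exact ⟨(G.induce (A \ {v})).connectedComponentMk ⟨z, ⟨hz, hzv⟩⟩, rfl⟩
  have hninj : ¬ Function.Injective f := by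
    intro hinj
    have h1 : f ((G.induce (A \ {v})).connectedComponentMk ⟨x, hx⟩) = f ((G.induce (A \ {v})).connectedComponentMk ⟨y, hy⟩) := by
      rw [hf, cmap_mk, cmap_mk]
      refine ConnectedComponent.sound ?_
      exact ((induce_adj' (x := ⟨x, hx.1⟩) (y := ⟨v, hv⟩) hax.symm).reachable).trans
        (induce_adj' (x := ⟨v, hv⟩) (y := ⟨y, hy.1⟩) hay).reachable
    have h2 := hinj h1
    have h3 := (ConnectedComponent.exact h2)
    exact hnr ⟨hx, hy, h3⟩
  have hle : Nat.card ((G.induce A).ConnectedComponent)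
      ≤ Nat.card ((G.induce (A \ {v})).ConnectedComponent) :=
    Nat.card_le_card_of_surjective f hsurj
  refine lt_of_le_of_ne hle ?_
  intro heq
  exact hninj (hsurj.bijective_of_nat_card_le (le_of_eq heq.symm)).injective

lemma comps_le_of_simplicial {w : V} (hw : w ∈ A)
    (hcl : ∀ p q : V, p ∈ A → q ∈ A → G.Adj w p → G.Adj w q → p = q ∨ G.Adj p q) :
    comps G (A \ {w}) ≤ comps G A := by
  classical
  refine Nat.card_le_card_of_injective (cmap (G := G) (Set.diff_subset : A \ {w} ⊆ A)) ?_
  intro c₁ c₂ h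
  induction c₁ using ConnectedComponent.ind with
  | _ z₁ =>
  induction c₂ using ConnectedComponent.ind with
  | _ z₂ =>
    obtain ⟨z₁, hz₁⟩ := z₁; obtain ⟨z₂, hz₂⟩ := z₂
    rw [cmap_mk, cmap_mk] at h
    obtain ⟨q⟩ := ConnectedComponent.exact h
    have := reroute hw hcl q.length _ _ q le_rfl hz₁.2 hz₂.2
    obtain ⟨h₁, h₂, hr⟩ := this
    exact ConnectedComponent.sound hr

/-- In a block graph, two nonadjacent distinct neighbours of `x` are in different
components of `G - x`. -/
lemma no_reach_del {x p q : V} (hB : IsBlockGraph G) (hxp : G.Adj x p) (hxq : G.Adj x q)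
    (hne : p ≠ q) (hpq : ¬ G.Adj p q) : ¬ Rch G ({x}ᶜ : Set V) p q := by
  rintro ⟨hp, hq, hr⟩
  obtain ⟨W⟩ := hr
  let P0 := W.toPath
  let hom : G.induce ({x}ᶜ : Set V) →g G := ⟨Subtype.val, fun h => h⟩
  let P : G.Walk p q := P0.val.map hom
  have hPpath : P.IsPath := Walk.map_isPath_of_injective Subtype.val_injective P0.2
  have hxP : x ∉ P.support := by
    intro hx
    rw [Walk.support_map] at hx
    obtain ⟨z, hz, hzx⟩ := List.mem_map.mp hx
    exact z.2 hzx
  let Q : G.Walk x p := Walk.cons hxq P.reverse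
  have hQpath : Q.IsPath := by
    rw [Walk.cons_isPath_iff]
    refine ⟨hPpath.reverse, ?_⟩
    rw [Walk.support_reverse]
    intro hx
    exact hxP (List.mem_reverse.mp hx)
  let cyc : G.Walk x x := Walk.cons hxp Q.reverse
  have hcyc : cyc.IsCycle := by
    rw [Walk.cons_isCycle_iff]
    refine ⟨hQpath.reverse, ?_⟩
    rw [Walk.edges_reverse]
    intro hmem
    rw [List.mem_reverse] at hmem
    have : Q.edges = s(x, q) :: P.reverse.edges := rfl
    rw [this, List.mem_cons] at hmem
    rcases hmem with h | h
    · rw [Sym2.eq_iff] at h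
      rcases h with ⟨-, h2⟩ | ⟨h1, -⟩
      · exact hne h2
      · exact hxq.ne h1
    · rw [Walk.edges_reverse, List.mem_reverse] at h
      exact hxP (P.fst_mem_support_of_mem_edges h)
  have hpmem : p ∈ cyc.support := by
    have : p ∈ Q.reverse.support := by
      rw [Walk.support_reverse, List.mem_reverse]
      exact Q.end_mem_support
    simp [cyc, Walk.support_cons, this]
  have hqmem : q ∈ cyc.support := by
    have : q ∈ Q.reverse.support := by
      rw [Walk.support_reverse, List.mem_reverse]
      have : q ∈ P.reverse.support := by
        rw [Walk.support_reverse, List.mem_reverse]; exact P.end_mem_support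
      simp [Q, Walk.support_cons, this]
    rw [Walk.support_reverse, List.mem_reverse] at this
    simp [cyc, Walk.support_cons, this]
  rcases hB x cyc hcyc p hpmem q hqmem with h | h
  · exact hne h
  · exact hpq h

/-- `x` is a neighbour of `v` all of whose neighbours outside `N[v]` form a clique. -/
def GoodNb (G : SimpleGraph V) (v x : V) : Prop :=
  ∀ p q : V, G.Adj x p → G.Adj x q → p ≠ v → ¬ G.Adj v p → q ≠ v → ¬ G.Adj v q →
    p = q ∨ G.Adj p q

def Works (G : SimpleGraph V) (v : V) : Prop :=
  ∃ x y : V, G.Adj v x ∧ G.Adj v y ∧ GoodNb G v x ∧ GoodNb G v y ∧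
    ¬ Rch G ({v}ᶜ : Set V) x y

lemma descent (hB : IsBlockGraph G) :
    ∀ (n : ℕ) (x p q : V), G.Adj x p → G.Adj x q → p ≠ q → ¬ G.Adj p q →
      ({z | Rch G ({x}ᶜ : Set V) p z}.ncard + {z | Rch G ({x}ᶜ : Set V) q z}.ncard ≤ n) →
      ∃ v, Works G v := by
  intro n
  induction n with
  | zero =>
    intro x p q hxp hxq hne hpq hcard
    exfalso
    have hp : p ∈ ({x}ᶜ : Set V) := hxp.ne'
    have : ({z | Rch G ({x}ᶜ : Set V) p z}).Nonempty := ⟨p, rch_refl hp⟩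
    have := (Set.ncard_pos (Set.toFinite _)).mpr this
    omega
  | succ n ih =>
    intro x p q hxp hxq hne hpq hcard
    have hstep : ∀ p' q' : V, G.Adj x p' → G.Adj x q' → p' ≠ q' → ¬ G.Adj p' q' →
        {z | Rch G ({x}ᶜ : Set V) p' z}.ncard + {z | Rch G ({x}ᶜ : Set V) q' z}.ncard ≤ n + 1 →
        (¬ ∃ y, G.Adj x y ∧ Rch G ({x}ᶜ : Set V) p' y ∧ GoodNb G x y) → ∃ v, Works G v := by
      intro p' q' hxp' hxq' hne' hpq' hcard' hbad
      have hng : ¬ GoodNb G x p' := fun hg =>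
        hbad ⟨p', hxp', rch_refl hxp'.ne', hg⟩
      rw [GoodNb] at hng
      push_neg at hng
      obtain ⟨p₂, q₂, hpp₂, hpq₂, hp₂x, hp₂n, hq₂x, hq₂n, hne₂, hnadj₂⟩ := hng
      -- p₂, q₂ are nonadjacent distinct neighbours of p'
      have hnr₂x : ¬ Rch G ({p'}ᶜ : Set V) p₂ x :=
        no_reach_del hB hpp₂ hxp'.symm hp₂x (fun h => hp₂n h.symm)
      have hnr₂q : ¬ Rch G ({p'}ᶜ : Set V) q₂ x :=
        no_reach_del hB hpq₂ hxp'.symm hq₂x (fun h => hq₂n h.symm)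
      set C₂ := {z | Rch G ({p'}ᶜ : Set V) p₂ z} with hC₂
      set C₃ := {z | Rch G ({p'}ᶜ : Set V) q₂ z} with hC₃
      set Cp := {z | Rch G ({x}ᶜ : Set V) p' z} with hCp
      have hsub : C₂ ∪ C₃ ⊆ Cp \ {p'} := by
        rintro z (hz | hz)
        · have hzm : z ∈ ({p'}ᶜ : Set V) := by obtain ⟨-, h, -⟩ := hz; exact h
          refine ⟨?_, fun h => hzm h⟩
          · refine rch_trans (rch_adj hpp₂ hxp'.ne' ?_) (rch_strengthen hz ?_)
            · exact hp₂x
            · intro t ht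
              intro htx
              exact hnr₂x (htx ▸ ht)
        · have hzm : z ∈ ({p'}ᶜ : Set V) := by obtain ⟨-, h, -⟩ := hz; exact h
          refine ⟨?_, fun h => hzm h⟩
          · refine rch_trans (rch_adj hpq₂ hxp'.ne' ?_) (rch_strengthen hz ?_)
            · exact hq₂x
            · intro t ht
              intro htx
              exact hnr₂q (htx ▸ ht)
      have hdisj : Disjoint C₂ C₃ := by
        rw [Set.disjoint_left]
        intro z hz₂ hz₃
        exact no_reach_del hB hpp₂ hpq₂ hne₂ hnadj₂ (rch_trans hz₂ (rch_symm hz₃))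
      have hunion : C₂.ncard + C₃.ncard = (C₂ ∪ C₃).ncard :=
        (Set.ncard_union_eq hdisj (Set.toFinite _) (Set.toFinite _)).symm
      have hple : (C₂ ∪ C₃).ncard + 1 ≤ Cp.ncard := by
        have h1 : insert p' (C₂ ∪ C₃) ⊆ Cp := by
          rintro z (rfl | hz)
          · exact rch_refl hxp'.ne'
          · exact (hsub hz).1
        have h2 : p' ∉ C₂ ∪ C₃ := fun h => (hsub h).2 rfl
        have := Set.ncard_le_ncard h1 (Set.toFinite _)
        rwa [Set.ncard_insert_of_notMem h2 (Set.toFinite _)] at this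
      have hq'card : Cp.ncard ≤ n + 1 := le_trans (Nat.le_add_right _ _) hcard'
      exact ih p' p₂ q₂ hpp₂ hpq₂ hne₂ hnadj₂ (show C₂.ncard + C₃.ncard ≤ n by omega)
    by_cases hgp : ∃ y, G.Adj x y ∧ Rch G ({x}ᶜ : Set V) p y ∧ GoodNb G x y
    · by_cases hgq : ∃ y, G.Adj x y ∧ Rch G ({x}ᶜ : Set V) q y ∧ GoodNb G x y
      · obtain ⟨y₁, hy₁, hry₁, hg₁⟩ := hgp
        obtain ⟨y₂, hy₂, hry₂, hg₂⟩ := hgq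
        refine ⟨x, y₁, y₂, hy₁, hy₂, hg₁, hg₂, ?_⟩
        intro hr
        exact no_reach_del hB hxp hxq hne hpq
          (rch_trans hry₁ (rch_trans hr (rch_symm hry₂)))
      · exact hstep q p hxq hxp hne.symm (fun h => hpq h.symm) (by omega) hgq
    · exact hstep p q hxp hxq hne hpq hcard hgp

lemma exists_nonsimplicial
    (hG : ¬ ∀ a b : V, G.Reachable a b → a = b ∨ G.Adj a b) :
    ∃ x p q : V, G.Adj x p ∧ G.Adj x q ∧ p ≠ q ∧ ¬ G.Adj p q := by
  by_contra hcon
  push_neg at hcon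
  apply hG
  intro a b hr
  obtain ⟨W⟩ := hr
  induction W with
  | nil => exact Or.inl rfl
  | @cons u c w h' t ih =>
    rcases ih with rfl | hadj
    · exact Or.inr h'
    · by_cases hab : u = w
      · exact Or.inl hab
      · exact Or.inr (hcon c u w h'.symm hadj hab)

end Aux

/-- If `G` is a block graph which is not a disjoint union of cliques,
then there is a cut vertex `v` of `G` with
`C(G \ {v}) = { S \ {v} : S ∈ C(G), v ∈ S }`. -/
theorem exists_cutVertex_cutSets_deleteVert
    (G : SimpleGraph V) (hB : IsBlockGraph G)
    (hG : ¬ ∀ a b : V, G.Reachable a b → a = b ∨ G.Adj a b) :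
    ∃ v : V, CutVertex G v ∧
      cutSets G {v}ᶜ =
        {S | ∃ T ∈ cutSets G Set.univ, v ∈ T ∧ S = T \ {v}} := by
  classical
  obtain ⟨x₀, p₀, q₀, h1, h2, h3, h4⟩ := exists_nonsimplicial hG
  obtain ⟨v, x₁, x₂, ha₁, ha₂, hg₁, hg₂, hnr⟩ :=
    descent (G := G) hB _ x₀ p₀ q₀ h1 h2 h3 h4 le_rfl
  have hx₁v : x₁ ≠ v := ha₁.ne'
  have hx₂v : x₂ ≠ v := ha₂.ne'
  have huniv : (Set.univ : Set V) \ {v} = ({v}ᶜ : Set V) := by ext z; simp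
  have hcompu : Nat.card G.ConnectedComponent = comps G Set.univ :=
    Nat.card_congr (induceUnivIso G).connectedComponentEquiv.symm
  have hcut : CutVertex G v := by
    rw [CutVertex, hcompu]
    have := comps_lt_of_sep (A := Set.univ) (v := v) (x := x₁) (y := x₂)
      trivial ⟨trivial, hx₁v⟩ ⟨trivial, hx₂v⟩ ha₁ ha₂ (by rw [huniv]; exact hnr)
    rwa [huniv] at this
  have key : ∀ (S : Set V), S ⊆ ({v}ᶜ : Set V) →
      (∀ w ∈ S, comps G (({v}ᶜ : Set V) \ (S \ {w})) < comps G (({v}ᶜ : Set V) \ S)) →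
      ∀ x, G.Adj v x → GoodNb G v x →
      ∃ y, G.Adj v y ∧ y ∉ S ∧ Rch G ({v}ᶜ : Set V) x y := by
    intro S hSsub hScond x hvx hgood
    by_cases hxS : x ∈ S
    · by_contra hno
      push_neg at hno
      have hlt := hScond x hxS
      set A := (({v}ᶜ : Set V) \ (S \ {x})) with hA
      have hxA : x ∈ A := ⟨hvx.ne', fun h => h.2 rfl⟩
      have hAdiff : A \ {x} = ({v}ᶜ : Set V) \ S := by
        rw [hA]; ext z
        simp only [Set.mem_diff, Set.mem_compl_iff, Set.mem_singleton_iff]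
        constructor
        · rintro ⟨⟨hzv, hzS⟩, hzx⟩
          exact ⟨hzv, fun hS => hzS ⟨hS, hzx⟩⟩
        · rintro ⟨hzv, hzS⟩
          exact ⟨⟨hzv, fun h => hzS h.1⟩, fun h => hzS (h ▸ hxS)⟩
      have hcl : ∀ p q : V, p ∈ A → q ∈ A → G.Adj x p → G.Adj x q →
          p = q ∨ G.Adj p q := by
        intro p q hp hq hxp hxq
        have hpS : p ∉ S := fun h => hp.2 ⟨h, fun hh => hxp.ne' hh⟩
        have hqS : q ∉ S := fun h => hq.2 ⟨h, fun hh => hxq.ne' hh⟩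
        have hpadj : ¬ G.Adj v p := fun hvp =>
          (hno p hvp hpS) (rch_adj hxp hvx.ne' hp.1)
        have hqadj : ¬ G.Adj v q := fun hvq =>
          (hno q hvq hqS) (rch_adj hxq hvx.ne' hq.1)
        exact hgood p q hxp hxq hp.1 hpadj hq.1 hqadj
      have hle := comps_le_of_simplicial (A := A) hxA hcl
      rw [hAdiff] at hle
      omega
    · exact ⟨x, hvx, hxS, rch_refl hvx.ne'⟩
  refine ⟨v, hcut, ?_⟩
  ext S
  simp only [cutSets, Set.mem_setOf_eq]
  constructor
  · rintro ⟨hSsub, hS⟩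
    have hvS : v ∉ S := fun h => hSsub h rfl
    have hcond : ∀ w ∈ S, comps G (({v}ᶜ : Set V) \ (S \ {w})) <
        comps G (({v}ᶜ : Set V) \ S) := by
      rcases hS with rfl | h
      · intro w hw; exact absurd hw (Set.notMem_empty w)
      · exact h
    refine ⟨S ∪ {v}, ⟨Set.subset_univ _, Or.inr ?_⟩, Set.mem_union_right _ rfl, ?_⟩
    · intro w hw
      rcases hw with hwS | hwv
      · have hwv : w ≠ v := fun h => hvS (h ▸ hwS)
        have heq1 : Set.univ \ ((S ∪ {v}) \ {w}) = ({v}ᶜ : Set V) \ (S \ {w}) := by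
          ext z
          simp only [Set.mem_diff, Set.mem_univ, true_and, Set.mem_union,
            Set.mem_singleton_iff, Set.mem_compl_iff]
          have hvw : ¬ v = w := fun h => hwv h.symm
          by_cases hzv : z = v
          · simp only [hzv]; tauto
          · tauto
        have heq2 : Set.univ \ (S ∪ {v}) = ({v}ᶜ : Set V) \ S := by
          ext z
          simp only [Set.mem_diff, Set.mem_univ, true_and, Set.mem_union,
            Set.mem_singleton_iff, Set.mem_compl_iff]
          tauto
        rw [heq1, heq2]
        exact hcond w hwS
      · have hw' : w = v := hwv
        subst hw'
        obtain ⟨y₁, hvy₁, hy₁S, hr₁⟩ := key S hSsub hcond x₁ ha₁ hg₁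
        obtain ⟨y₂, hvy₂, hy₂S, hr₂⟩ := key S hSsub hcond x₂ ha₂ hg₂
        have hA1 : Set.univ \ ((S ∪ {w}) \ {w}) = Set.univ \ S := by
          ext z
          simp only [Set.mem_diff, Set.mem_univ, true_and, Set.mem_union,
            Set.mem_singleton_iff]
          by_cases hzv : z = w
          · subst hzv; tauto
          · tauto
        have hA2 : Set.univ \ (S ∪ {w}) = (Set.univ \ S) \ {w} := by
          ext z
          simp only [Set.mem_diff, Set.mem_univ, true_and, Set.mem_union,
            Set.mem_singleton_iff]
          tauto
        rw [hA1, hA2]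
        refine comps_lt_of_sep (v := w) ⟨trivial, hvS⟩
          ⟨⟨trivial, hy₁S⟩, hvy₁.ne'⟩ ⟨⟨trivial, hy₂S⟩, hvy₂.ne'⟩ hvy₁ hvy₂ ?_
        intro hr
        have hsub : (Set.univ \ S) \ {w} ⊆ ({w}ᶜ : Set V) := fun z hz => hz.2
        have hr' : Rch G ({w}ᶜ : Set V) y₁ y₂ := rch_mono hsub hr
        exact hnr (rch_trans hr₁ (rch_trans hr' (rch_symm hr₂)))
    · ext z
      simp only [Set.mem_diff, Set.mem_union, Set.mem_singleton_iff]
      constructor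
      · intro hz; exact ⟨Or.inl hz, fun h => hvS (h ▸ hz)⟩
      · rintro ⟨hz | hz, hzv⟩
        · exact hz
        · exact absurd hz hzv
  · rintro ⟨T, ⟨hTsub, hT⟩, hvT, rfl⟩
    have hTc : ∀ w ∈ T, comps G (Set.univ \ (T \ {w})) < comps G (Set.univ \ T) := by
      rcases hT with rfl | h
      · exact absurd hvT (Set.notMem_empty v)
      · exact h
    refine ⟨fun z hz => hz.2, Or.inr ?_⟩
    intro w hw
    have hwT : w ∈ T := hw.1
    have hwv : w ≠ v := hw.2
    have hlt := hTc w hwT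
    have hA1 : Set.univ \ (T \ {w}) = ({v}ᶜ : Set V) \ ((T \ {v}) \ {w}) := by
      ext z
      simp only [Set.mem_diff, Set.mem_univ, true_and, Set.mem_singleton_iff,
        Set.mem_compl_iff]
      have hvw : ¬ v = w := fun h => hwv h.symm
      by_cases hzv : z = v
      · simp only [hzv]; tauto
      · tauto
    have hA2 : Set.univ \ T = ({v}ᶜ : Set V) \ (T \ {v}) := by
      ext z
      simp only [Set.mem_diff, Set.mem_univ, true_and, Set.mem_singleton_iff,
        Set.mem_compl_iff]
      by_cases hzv : z = v
      · subst hzv; tauto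
      · tauto
    rwa [hA1, hA2] at hlt
end
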